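/- arXiv:math/0002165 — 5 statements merged into one kernel-verified Lean document; each statement's English description precedes it below -/
import Mathlib

section
/- For partial bijections gamma, gamma' of {1,...,n}, let deg(gamma) be the number of indices i with gamma not defined at i or gamma(i) ≠ i. Then deg(gamma * gamma') ≤ deg(gamma) + deg(gamma'). Moreover, if equality holds then gamma and gamma' commute. -/
open scoped BigOperators

/-- A partial bijection of `α`: a partially defined injective map,
encoded as an `Option`-valued function that is injective on its domain. -/
def PartialBij (α : Type*) : Type _ :=
  {f : α → Option α // ∀ x y z : α, f x = some z → f y = some z → x = y}

namespace PartialBij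

variable {α : Type*}

/-- Composition: `(g.comp f) x = g (f x)` (product of relations). -/
def comp (g f : PartialBij α) : PartialBij α :=
  ⟨fun x => (f.1 x).bind g.1, by
    intro x y z hx hy
    rcases Option.bind_eq_some_iff.mp hx with ⟨a, ha, ha'⟩
    rcases Option.bind_eq_some_iff.mp hy with ⟨b, hb, hb'⟩
    have hab : a = b := g.2 _ _ _ ha' hb'
    subst hab
    exact f.2 _ _ _ ha hb⟩

instance : Monoid (PartialBij α) where
  mul := comp
  one := ⟨fun x => some x, fun x y z hx hy =>
    (Option.some_inj.mp hx).trans (Option.some_inj.mp hy).symm⟩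
  mul_assoc a b c := Subtype.ext <| funext fun x => (Option.bind_assoc _ _ _).symm
  one_mul a := Subtype.ext <| funext fun x => by
    show (a.1 x).bind some = a.1 x
    cases a.1 x <;> rfl
  mul_one a := Subtype.ext <| funext fun x => rfl

theorem mul_def (g f : PartialBij α) (x : α) : (g * f).1 x = (f.1 x).bind g.1 := rfl

theorem one_def (x : α) : (1 : PartialBij α).1 x = some x := rfl

/-- The domain of a partial bijection. -/
def dom (f : PartialBij α) : Set α := {x | f.1 x ≠ none}

/-- The range of a partial bijection. -/
def ran (f : PartialBij α) : Set α := {y | ∃ x, f.1 x = some y}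

open Classical in
/-- The inverse partial bijection `γ*`. -/
noncomputable def inv (f : PartialBij α) : PartialBij α :=
  ⟨fun y => if h : ∃ x, f.1 x = some y then some h.choose else none, by
    intro a b z ha hb
    dsimp only at ha hb
    by_cases h1 : ∃ x, f.1 x = some a
    · by_cases h2 : ∃ x, f.1 x = some b
      · rw [dif_pos h1] at ha
        rw [dif_pos h2] at hb
        have ha' := h1.choose_spec
        have hb' := h2.choose_spec
        rw [Option.some_inj.mp ha] at ha'
        rw [Option.some_inj.mp hb] at hb'
        exact Option.some_inj.mp (ha'.symm.trans hb')
      · rw [dif_neg h2] at hb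
        exact absurd hb (by simp)
    · rw [dif_neg h1] at ha
      exact absurd ha (by simp)⟩

open Classical in
/-- The identity bijection `1_Y` of a subset `Y ⊆ α`. -/
noncomputable def idOn (Y : Set α) : PartialBij α :=
  ⟨fun x => if x ∈ Y then some x else none, by
    intro x y z hx hy
    dsimp only at hx hy
    split_ifs at hx hy
    exact (Option.some_inj.mp hx).trans (Option.some_inj.mp hy).symm⟩

/-- A permutation regarded as a (total) partial bijection. -/
def ofPerm (s : Equiv.Perm α) : PartialBij α :=
  ⟨fun x => some (s x), fun x y z hx hy =>
    s.injective ((Option.some_inj.mp hx).trans (Option.some_inj.mp hy).symm)⟩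

/-- The idempotent `ε_k`: the identity bijection of `α \ {k}`. -/
def eps [DecidableEq α] (k : α) : PartialBij α :=
  ⟨fun x => if x = k then none else some x, by
    intro x y z hx hy
    dsimp only at hx hy
    split_ifs at hx hy
    exact (Option.some_inj.mp hx).trans (Option.some_inj.mp hy).symm⟩

/-- `deg γ`: the number of points which are not fixed points of `γ`. -/
def deg {n : ℕ} (f : PartialBij (Fin n)) : ℕ :=
  (Finset.univ.filter fun i : Fin n => f.1 i ≠ some i).card

/-- `deg_m γ`: the number of points in `{m+1,…,n}` (0-indexed: indices `≥ m`)
which are not fixed points of `γ`. -/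
def degm {n : ℕ} (m : ℕ) (f : PartialBij (Fin n)) : ℕ :=
  (Finset.univ.filter fun i : Fin n => m ≤ i.val ∧ f.1 i ≠ some i).card

/-- The rank of a partial bijection: the cardinality of its domain. -/
def rank {n : ℕ} (f : PartialBij (Fin n)) : ℕ :=
  (Finset.univ.filter fun i : Fin n => f.1 i ≠ none).card

end PartialBij

/-! Every point moved by `γγ'` is moved by `γ` or by `γ'`, so the support of the product lies in
the union of the supports. Equality of degrees therefore forces the supports to be disjoint, and
partial bijections with disjoint supports commute. -/

open Finset

namespace PartialBij

variable {α : Type*}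

section Support

variable [Fintype α] [DecidableEq α]

def support (f : PartialBij α) : Finset α :=
  univ.filter fun x => f.1 x ≠ some x

@[simp]
theorem mem_support {f : PartialBij α} {x : α} : x ∈ f.support ↔ f.1 x ≠ some x := by
  simp [support]

theorem support_mul_subset (g f : PartialBij α) : (g * f).support ⊆ g.support ∪ f.support := by
  intro x hx
  by_contra hfixed
  simp only [mem_union, mem_support, not_or, not_not] at hfixed
  exact mem_support.mp hx (by rw [mul_def, hfixed.2, Option.bind_some, hfixed.1])

end Support

theorem deg_eq_card_support {n : ℕ} (f : PartialBij (Fin n)) : deg f = #f.support := rfl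

section Commute

variable {g f : PartialBij α} (hfixed : ∀ x, g.1 x = some x ∨ f.1 x = some x)
include hfixed

/-- A point `y = f x` fixed by `f` would force `x = y` by injectivity of `f`. -/
theorem apply_eq_self_of_forall_fixed {x y : α} (hx : g.1 x = some x) (hy : f.1 x = some y) :
    g.1 y = some y := by
  rcases hfixed y with hgy | hfy
  · exact hgy
  · obtain rfl : x = y := f.2 x y y hy hfy
    exact hx

theorem mul_apply_eq_of_forall_fixed {x : α} (hx : g.1 x = some x) : (g * f).1 x = f.1 x := by
  rw [mul_def]
  cases hy : f.1 x with
  | none => rfl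
  | some y => exact apply_eq_self_of_forall_fixed hfixed hx hy

theorem commute_of_forall_fixed : Commute g f := by
  refine Subtype.ext (funext fun x => ?_)
  rcases hfixed x with hx | hx
  · rw [mul_apply_eq_of_forall_fixed hfixed hx, mul_def f g, hx, Option.bind_some]
  · rw [mul_apply_eq_of_forall_fixed (fun y => (hfixed y).symm) hx, mul_def g f, hx,
      Option.bind_some]

end Commute

theorem commute_of_disjoint_support [Fintype α] [DecidableEq α] {g f : PartialBij α}
    (h : Disjoint g.support f.support) : Commute g f :=
  commute_of_forall_fixed fun x => by
    by_contra hx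
    simp only [not_or] at hx
    exact disjoint_left.mp h (mem_support.mpr hx.1) (mem_support.mpr hx.2)

end PartialBij

/-- `deg (γγ') ≤ deg γ + deg γ'`, and equality implies that `γ` and `γ'`
commute. -/
theorem deg_mul_le {n : ℕ} (γ γ' : PartialBij (Fin n)) :
    PartialBij.deg (γ * γ') ≤ PartialBij.deg γ + PartialBij.deg γ' ∧
    (PartialBij.deg (γ * γ') = PartialBij.deg γ + PartialBij.deg γ' →
      γ * γ' = γ' * γ) := by
  simp only [PartialBij.deg_eq_card_support]
  have hsub := card_le_card (PartialBij.support_mul_subset γ γ')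
  have hunion := card_union_le γ.support γ'.support
  refine ⟨hsub.trans hunion, fun heq => PartialBij.commute_of_disjoint_support ?_⟩
  exact card_union_eq_card_add_card.mp (le_antisymm hunion (heq ▸ hsub))
end

section
/- Fix m ≤ n. The map sending sigma to the partial bijection obtained from sigma by removing from its graph all fixed points lying in {m+1,...,n} is a bijection from Gamma(m,n) := {sigma ∈ Gamma(n) : {m+1,...,n} ⊆ dom(sigma) and {m+1,...,n} ⊆ range(sigma)} onto the set of partial bijections gamma of {1,...,n} with dom(gamma) ∩ {m+1,...,n} = range(gamma) ∩ {m+1,...,n} and with no fixed points in {m+1,...,n}. -/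
/-! Write `S = {m+1,…,n}`. For `σ ∈ Γ(m,n)` every point of `S` lies in `dom σ`, so the points of `S`
where the stripped map is undefined are exactly the fixed points that were removed: `σ` is recovered
by adding the identity there. A point `i ∈ S` stays in the domain iff `σ i ≠ i`, and, as
`i ∈ ran σ`, this holds iff `i` has a preimage other than itself, i.e. iff `i` stays in the range.
Conversely, if `dom γ ∩ S = ran γ ∩ S` and `γ` has no fixed point in
`S`, adding the identity on `S \ dom γ = S \ ran γ` gives an element of `Γ(m,n)` whose stripping
is `γ`. -/

open scoped BigOperators

/-- `Γ(m,n)`: partial bijections of `{1,…,n}` whose domain and range both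
contain `{m+1,…,n}` (0-indexed: all indices `≥ m`). -/
def GammaBand (m n : ℕ) : Set (PartialBij (Fin n)) :=
  {σ | ∀ i : Fin n, m ≤ i.val → (i ∈ PartialBij.dom σ ∧ i ∈ PartialBij.ran σ)}

/-- Removing from `σ` all fixed points lying in `{m+1,…,n}`. -/
def stripBand {n : ℕ} (m : ℕ) (σ : PartialBij (Fin n)) : PartialBij (Fin n) :=
  ⟨fun i => (σ.1 i).bind fun j => if j = i ∧ m ≤ i.val then none else some j, by
    intro x y z hx hy
    dsimp only at hx hy
    rcases Option.bind_eq_some_iff.mp hx with ⟨a, ha, ha'⟩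
    rcases Option.bind_eq_some_iff.mp hy with ⟨b, hb, hb'⟩
    split_ifs at ha' hb'
    rw [Option.some_inj.mp ha'] at ha
    rw [Option.some_inj.mp hb'] at hb
    exact σ.2 _ _ _ ha hb⟩

namespace PartialBij

variable {α : Type*}

theorem apply_ne_self_iff_exists_ne {f : PartialBij α} {i : α} (hi : i ∈ ran f) :
    f.1 i ≠ some i ↔ ∃ x ≠ i, f.1 x = some i := by
  obtain ⟨x, hx⟩ := hi
  refine ⟨fun h => ⟨x, fun hxi => h (hxi ▸ hx), hx⟩, ?_⟩
  rintro ⟨y, hyi, hy⟩ hii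
  exact hyi (f.2 _ _ _ hy hii)

section eraseFixedOn

variable [DecidableEq α] (S : Set α) [DecidablePred (· ∈ S)]

def eraseFixedOn (f : PartialBij α) : PartialBij α :=
  ⟨fun i => (f.1 i).bind fun j => if j = i ∧ i ∈ S then none else some j, by
    intro x y z hx hy
    simp only [Option.bind_eq_some_iff, Option.ite_none_left_eq_some, Option.some.injEq] at hx hy
    obtain ⟨_, hx, -, rfl⟩ := hx
    obtain ⟨_, hy, -, rfl⟩ := hy
    exact f.2 _ _ _ hx hy⟩

variable {S} {f : PartialBij α} {i j : α}

theorem eraseFixedOn_apply_eq_some :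
    (eraseFixedOn S f).1 i = some j ↔ f.1 i = some j ∧ ¬(j = i ∧ i ∈ S) := by
  simp only [eraseFixedOn, Option.bind_eq_some_iff, Option.ite_none_left_eq_some]
  aesop

theorem eraseFixedOn_apply_eq_none :
    (eraseFixedOn S f).1 i = none ↔ f.1 i = none ∨ (f.1 i = some i ∧ i ∈ S) := by
  cases h : f.1 i <;> simp [eraseFixedOn, h, eq_comm]

theorem eraseFixedOn_apply_ne_self (hi : i ∈ S) : (eraseFixedOn S f).1 i ≠ some i :=
  fun h => (eraseFixedOn_apply_eq_some.1 h).2 ⟨rfl, hi⟩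

theorem mem_dom_eraseFixedOn_iff (hi : i ∈ S) (hf : i ∈ dom f) :
    i ∈ dom (eraseFixedOn S f) ↔ f.1 i ≠ some i := by
  simp only [dom, Set.mem_ofPred_eq, ne_eq, eraseFixedOn_apply_eq_none, hi, and_true]
  exact not_congr (or_iff_right hf)

theorem mem_ran_eraseFixedOn_iff (hi : i ∈ S) :
    i ∈ ran (eraseFixedOn S f) ↔ ∃ x ≠ i, f.1 x = some i := by
  simp only [ran, Set.mem_ofPred_eq, eraseFixedOn_apply_eq_some]
  refine exists_congr fun x => ?_
  constructor
  · rintro ⟨hx, hxi⟩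
    exact ⟨fun h => hxi ⟨h.symm, h ▸ hi⟩, hx⟩
  · rintro ⟨hxi, hx⟩
    exact ⟨hx, fun h => hxi h.1.symm⟩

theorem dom_inter_eq_ran_inter_eraseFixedOn (hf : S ⊆ dom f ∩ ran f) :
    dom (eraseFixedOn S f) ∩ S = ran (eraseFixedOn S f) ∩ S :=
  Set.ext fun i => and_congr_left fun hi => by
    rw [mem_dom_eraseFixedOn_iff hi (hf hi).1, mem_ran_eraseFixedOn_iff hi,
      apply_ne_self_iff_exists_ne (hf hi).2]

theorem elim_eraseFixedOn_apply (hf : S ⊆ dom f) (i : α) :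
    ((eraseFixedOn S f).1 i).elim (if i ∈ S then some i else none) some = f.1 i := by
  rcases h : (eraseFixedOn S f).1 i with _ | j
  · rcases eraseFixedOn_apply_eq_none.1 h with hfi | ⟨hfi, hi⟩
    · have hi : i ∉ S := fun hi => hf hi hfi
      simp [hi, hfi]
    · simp [hi, hfi]
  · exact (eraseFixedOn_apply_eq_some.1 h).1.symm

theorem eraseFixedOn_injOn : Set.InjOn (eraseFixedOn S) {f | S ⊆ dom f} := by
  intro f hf g hg hfg
  refine Subtype.ext <| funext fun i => ?_
  rw [← elim_eraseFixedOn_apply hf, ← elim_eraseFixedOn_apply hg, hfg]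

end eraseFixedOn

section fillFixedOn

variable (S : Set α) [DecidablePred (· ∈ S)]

open Classical in
/-- Adjoins to `g` the identity on `S \ (dom g ∪ ran g)`; avoiding `ran g` keeps the result
injective whatever `g` is. -/
noncomputable def fillFixedOn (g : PartialBij α) : PartialBij α :=
  ⟨fun i => (g.1 i).elim (if i ∈ S ∧ i ∉ ran g then some i else none) some, by
    have key : ∀ a z, (g.1 a).elim (if a ∈ S ∧ a ∉ ran g then some a else none) some = some z →
        g.1 a = some z ∨ (a = z ∧ z ∉ ran g) := by
      intro a z h
      cases ha : g.1 a <;> aesop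
    intro x y z hx hy
    rcases key x z hx with hx | ⟨hxz, hz⟩ <;> rcases key y z hy with hy | ⟨hyz, hz'⟩
    · exact g.2 _ _ _ hx hy
    · exact absurd ⟨x, hx⟩ hz'
    · exact absurd ⟨y, hy⟩ hz
    · exact hxz.trans hyz.symm⟩

variable {S} {g : PartialBij α}

theorem fillFixedOn_apply_of_ne_none {i : α} (hi : g.1 i ≠ none) :
    (fillFixedOn S g).1 i = g.1 i := by
  obtain ⟨j, hj⟩ := Option.ne_none_iff_exists'.1 hi
  simp [fillFixedOn, hj]

theorem fillFixedOn_apply_self {i : α} (hi : i ∈ S) (hg : g.1 i = none) (hr : i ∉ ran g) :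
    (fillFixedOn S g).1 i = some i := by
  simp [fillFixedOn, hg, hi, hr]

theorem subset_dom_inter_ran_fillFixedOn (hg : dom g ∩ S = ran g ∩ S) :
    S ⊆ dom (fillFixedOn S g) ∩ ran (fillFixedOn S g) := by
  intro i hi
  by_cases hdom : g.1 i = none
  · have hr : i ∉ ran g := fun hr => (hg.ge ⟨hr, hi⟩).1 hdom
    have hfill := fillFixedOn_apply_self hi hdom hr
    exact ⟨by simp [dom, hfill], i, hfill⟩
  · obtain ⟨x, hx⟩ := (hg.le ⟨hdom, hi⟩).1
    refine ⟨?_, x, ?_⟩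
    · simpa [dom, fillFixedOn_apply_of_ne_none hdom] using hdom
    · rwa [fillFixedOn_apply_of_ne_none (by simp [hx])]

theorem eraseFixedOn_fillFixedOn [DecidableEq α] (hg : ∀ i ∈ S, g.1 i ≠ some i) :
    eraseFixedOn S (fillFixedOn S g) = g := by
  refine Subtype.ext <| funext fun i => ?_
  cases h : g.1 i with
  | none =>
    refine eraseFixedOn_apply_eq_none.2 ?_
    by_cases hi : i ∈ S ∧ i ∉ ran g
    · exact .inr ⟨by simp [fillFixedOn, h, hi], hi.1⟩
    · exact .inl (by simp [fillFixedOn, h, hi])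
  | some j =>
    refine eraseFixedOn_apply_eq_some.2 ⟨?_, ?_⟩
    · exact (fillFixedOn_apply_of_ne_none (by simp [h])).trans h
    · rintro ⟨rfl, hi⟩
      exact hg _ hi h

end fillFixedOn

end PartialBij

theorem stripBand_eq_eraseFixedOn (n m : ℕ) :
    stripBand (n := n) m = PartialBij.eraseFixedOn {i : Fin n | m ≤ i.val} :=
  rfl

theorem stripBand_bijection_general (n m : ℕ) :
    Set.InjOn (stripBand m) (GammaBand m n) ∧
    stripBand m '' GammaBand m n =
      {γ : PartialBij (Fin n) |
        PartialBij.dom γ ∩ {i : Fin n | m ≤ i.val} =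
          PartialBij.ran γ ∩ {i : Fin n | m ≤ i.val} ∧
        ∀ i : Fin n, m ≤ i.val → γ.1 i ≠ some i} := by
  rw [stripBand_eq_eraseFixedOn]
  refine ⟨PartialBij.eraseFixedOn_injOn.mono fun σ hσ i hi => (hσ i hi).1, ?_⟩
  apply Set.Subset.antisymm
  · rintro _ ⟨σ, hσ, rfl⟩
    exact ⟨PartialBij.dom_inter_eq_ran_inter_eraseFixedOn fun i hi => hσ i hi,
      fun i hi => PartialBij.eraseFixedOn_apply_ne_self hi⟩
  · rintro γ ⟨hdr, hfix⟩
    exact ⟨PartialBij.fillFixedOn _ γ,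
      fun i hi => PartialBij.subset_dom_inter_ran_fillFixedOn hdr hi,
      PartialBij.eraseFixedOn_fillFixedOn hfix⟩

/-- The map removing fixed points in `{m+1,…,n}` is a bijection from `Γ(m,n)`
onto the set of partial bijections `γ` with
`dom γ ∩ {m+1,…,n} = range γ ∩ {m+1,…,n}` and no fixed points in
`{m+1,…,n}`. -/
theorem stripBand_bijection (n m : ℕ) (hm : m ≤ n) :
    Set.InjOn (stripBand m) (GammaBand m n) ∧
    stripBand m '' GammaBand m n =
      {γ : PartialBij (Fin n) |
        PartialBij.dom γ ∩ {i : Fin n | m ≤ i.val} =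
          PartialBij.ran γ ∩ {i : Fin n | m ≤ i.val} ∧
        ∀ i : Fin n, m ≤ i.val → γ.1 i ≠ some i} :=
  stripBand_bijection_general n m
end

section
/- Let A(n) = C[Gamma(n)] and let A_{n-1}(n) be the centralizer in A(n) of the subsemigroup Gamma_{n-1}(n) of partial bijections fixing each of 1,...,n-1 (i.e. whose matrices have first n-1 diagonal entries equal to 1). Then the linear map theta_n : A(n) → A(n-1) induced by striking the last row and column of matrices restricts to a unital algebra homomorphism A_{n-1}(n) → A(n-1), given on this centralizer by a ↦ eps_n * a * eps_n. -/
open scoped BigOperators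

namespace PartialBij

/-- The upper-left `n × n` corner of a partial bijection of `{1,…,n+1}`. -/
def corner {n : ℕ} (γ : PartialBij (Fin (n + 1))) : PartialBij (Fin n) :=
  ⟨fun i => (γ.1 i.castSucc).bind fun j => if h : j.val < n then some ⟨j.val, h⟩ else none, by
    intro x y z hx hy
    dsimp only at hx hy
    rcases Option.bind_eq_some_iff.mp hx with ⟨a, ha, ha'⟩
    rcases Option.bind_eq_some_iff.mp hy with ⟨b, hb, hb'⟩
    have haz : a = z.castSucc := by
      by_cases h : a.val < n
      · rw [dif_pos h] at ha'
        have := Option.some_inj.mp ha'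
        apply Fin.ext
        rw [← this]
        simp
      · rw [dif_neg h] at ha'
        exact absurd ha' (by simp)
    have hbz : b = z.castSucc := by
      by_cases h : b.val < n
      · rw [dif_pos h] at hb'
        have := Option.some_inj.mp hb'
        apply Fin.ext
        rw [← this]
        simp
      · rw [dif_neg h] at hb'
        exact absurd hb' (by simp)
    subst haz
    rw [hbz] at hb
    exact Fin.castSucc_injective n (γ.2 _ _ _ ha hb)⟩

/-- The `0`-embedding `ψ : Γ(n) → Γ(n+1)` (extension by zero). -/
def extend0 {n : ℕ} (γ : PartialBij (Fin n)) : PartialBij (Fin (n + 1)) :=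
  ⟨fun i => if h : i.val < n then (γ.1 ⟨i.val, h⟩).map Fin.castSucc else none, by
    intro x y z hx hy
    dsimp only at hx hy
    by_cases h1 : x.val < n
    · by_cases h2 : y.val < n
      · rw [dif_pos h1] at hx
        rw [dif_pos h2] at hy
        rcases Option.map_eq_some_iff.mp hx with ⟨a, ha, ha'⟩
        rcases Option.map_eq_some_iff.mp hy with ⟨b, hb, hb'⟩
        have hab : a = b := Fin.castSucc_injective n (ha'.trans hb'.symm)
        subst hab
        have := γ.2 _ _ _ ha hb
        exact Fin.ext (by simpa using congrArg Fin.val this)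
      · rw [dif_neg h2] at hy
        exact absurd hy (by simp)
    · rw [dif_neg h1] at hx
      exact absurd hx (by simp)⟩

/-- `θ_{n+1} : C[Γ(n+1)] → C[Γ(n)]`, the linear map striking the last
row and column of the monomial matrices. -/
noncomputable def theta (n : ℕ) (a : MonoidAlgebra ℂ (PartialBij (Fin (n + 1)))) :
    MonoidAlgebra ℂ (PartialBij (Fin n)) :=
  MonoidAlgebra.mapDomain corner a

/-- The image of `Γ_m(n)` (partial bijections fixing each of the first `m` points)
inside the semigroup algebra `C[Γ(n)]`. -/
def Gset (m n : ℕ) : Set (MonoidAlgebra ℂ (PartialBij (Fin n))) :=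
  {x | ∃ γ : PartialBij (Fin n), (∀ i : Fin n, i.val < m → γ.1 i = some i) ∧
    x = MonoidAlgebra.single γ 1}

end PartialBij

/-- Concatenation of compositions (the partition `M ∪ L`). -/
def Composition.app {a b : ℕ} (c₁ : Composition a) (c₂ : Composition b) :
    Composition (a + b) :=
  ⟨c₁.blocks ++ c₂.blocks,
   fun {i} hi => (List.mem_append.mp hi).elim (fun h => c₁.blocks_pos h)
     (fun h => c₂.blocks_pos h),
   by rw [List.sum_append, c₁.blocks_sum, c₂.blocks_sum]⟩

/-- `c_n^{M}` for a partition (composition) `M = (M_1,…,M_r)`: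
the sum over all sequences of `|M|` pairwise distinct indices of the
product of the disjoint cycles of lengths `M_1,…,M_r`. -/
noncomputable def cElt (n : ℕ) {N : ℕ} (c : Composition N) :
    MonoidAlgebra ℂ (Equiv.Perm (Fin n)) :=
  ∑ w : Fin N ↪ Fin n,
    MonoidAlgebra.single ((((List.ofFn ⇑w).splitWrtComposition c).map List.formPerm).prod) 1

/-- `c_n^{M}` for a partition `M` of `n`. -/
noncomputable def cPart (n : ℕ) (p : Nat.Partition n) :
    MonoidAlgebra ℂ (Equiv.Perm (Fin n)) :=
  cElt n ⟨p.parts.toList,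
    fun {i} hi => p.parts_pos (Multiset.mem_toList.mp hi),
    by rw [Multiset.sum_toList]⟩

/-- `Δ_n^{M}` in `C[Γ(n)]`. -/
noncomputable def Delta (n : ℕ) {N : ℕ} (c : Composition N) :
    MonoidAlgebra ℂ (PartialBij (Fin n)) :=
  ∑ w : Fin N ↪ Fin n,
    MonoidAlgebra.single
      (PartialBij.ofPerm ((((List.ofFn ⇑w).splitWrtComposition c).map List.formPerm).prod)) 1
    * (List.ofFn fun a : Fin N =>
        (1 - MonoidAlgebra.single (PartialBij.eps (w a)) (1 : ℂ))).prod

/-!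
Conjugation by the idempotent `ε = ε_{n+1}` strikes the last row and column of a
monomial matrix: `ε γ ε` is the `0`-extension `ψ` of the corner of `γ`, so
`ψ ∘ θ = ε (·) ε` on all of `A(n+1)`. Since `ψ` is injective and multiplicative, and
`ε ∈ Γ_n(n+1)` commutes with every `a` in the centralizer, the identity
`ε a b ε = (ε a ε)(ε b ε)` for an idempotent `ε` commuting with `a` gives
`θ(ab) = θ(a) θ(b)`.
-/
theorem IsIdempotentElem.mul_mul_mul_of_commute {S : Type*} [Semigroup S] {e a : S}
    (he : IsIdempotentElem e) (ha : Commute e a) (b : S) :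
    e * (a * b) * e = e * a * e * (e * b * e) := by
  have hae : e * a * e = e * a := by rw [mul_assoc, ← ha.eq, ← mul_assoc, he.eq]
  rw [hae]
  simp only [← mul_assoc]
  rw [hae]

theorem MonoidAlgebra.isIdempotentElem_single_one {k M : Type*} [Semiring k] [Mul M] {m : M}
    (hm : IsIdempotentElem m) : IsIdempotentElem (single m (1 : k)) := by
  rw [IsIdempotentElem, single_mul_single, hm.eq, one_mul]

namespace PartialBij

section eps

variable {α : Type*} [DecidableEq α] {k x : α}

@[simp]
theorem eps_apply_self : (eps k).1 k = none := if_pos rfl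

theorem eps_apply_of_ne (h : x ≠ k) : (eps k).1 x = some x := if_neg h

theorem isIdempotentElem_eps (k : α) : IsIdempotentElem (eps k) := by
  refine Subtype.ext (funext fun x => ?_)
  by_cases hx : x = k
  · simp [mul_def, hx]
  · simp [mul_def, eps_apply_of_ne hx]

end eps

variable {n : ℕ}

@[simp]
theorem eps_last_apply_castSucc (i : Fin n) : (eps (Fin.last n)).1 i.castSucc = some i.castSucc :=
  eps_apply_of_ne (Fin.castSucc_ne_last i)

@[simp]
theorem extend0_apply_castSucc (γ : PartialBij (Fin n)) (i : Fin n) :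
    (extend0 γ).1 i.castSucc = (γ.1 i).map Fin.castSucc := by
  simp [extend0]

@[simp]
theorem extend0_apply_last (γ : PartialBij (Fin n)) : (extend0 γ).1 (Fin.last n) = none := by
  simp [extend0]

theorem corner_one : corner (1 : PartialBij (Fin (n + 1))) = 1 := by
  refine Subtype.ext (funext fun i => ?_)
  simp [corner, one_def]

theorem leftInverse_corner_extend0 : Function.LeftInverse (corner (n := n)) extend0 := by
  refine fun γ => Subtype.ext (funext fun i => ?_)
  cases h : γ.1 i <;> simp [corner, h]

theorem extend0_mul (γ δ : PartialBij (Fin n)) :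
    extend0 (γ * δ) = extend0 γ * extend0 δ := by
  refine Subtype.ext (funext fun x => ?_)
  induction x using Fin.lastCases with
  | last => simp [mul_def]
  | cast i => cases h : δ.1 i <;> simp [mul_def, h]

theorem corner_apply_map_castSucc (γ : PartialBij (Fin (n + 1))) (i : Fin n) :
    ((corner γ).1 i).map Fin.castSucc = (γ.1 i.castSucc).bind (eps (Fin.last n)).1 := by
  rcases h : γ.1 i.castSucc with _ | j
  · simp [corner, h]
  · induction j using Fin.lastCases <;> simp [corner, h]

theorem eps_last_mul_mul_eps_last (γ : PartialBij (Fin (n + 1))) :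
    eps (Fin.last n) * γ * eps (Fin.last n) = extend0 (corner γ) := by
  refine Subtype.ext (funext fun x => ?_)
  induction x using Fin.lastCases with
  | last => simp [mul_def]
  | cast i => simp [mul_def, corner_apply_map_castSucc]

theorem theta_one : theta n 1 = 1 := by
  rw [theta, MonoidAlgebra.one_def, MonoidAlgebra.mapDomain_single, corner_one,
    MonoidAlgebra.one_def]

theorem mapDomain_extend0_mul (x y : MonoidAlgebra ℂ (PartialBij (Fin n))) :
    MonoidAlgebra.mapDomain extend0 (x * y) =
      MonoidAlgebra.mapDomain extend0 x * MonoidAlgebra.mapDomain extend0 y :=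
  MonoidAlgebra.mapDomain_mul (⟨extend0, extend0_mul⟩ : PartialBij (Fin n) →ₙ* _) x y

theorem mapDomain_extend0_theta (a : MonoidAlgebra ℂ (PartialBij (Fin (n + 1)))) :
    MonoidAlgebra.mapDomain extend0 (theta n a) =
      MonoidAlgebra.single (eps (Fin.last n)) 1 * a *
        MonoidAlgebra.single (eps (Fin.last n)) 1 := by
  induction a using MonoidAlgebra.induction_linear with
  | zero => simp [theta]
  | add a b ha hb =>
    simp only [theta, MonoidAlgebra.mapDomain_add] at ha hb ⊢
    rw [ha, hb, mul_add, add_mul]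
  | single γ c =>
    simp [theta, MonoidAlgebra.single_mul_single, eps_last_mul_mul_eps_last]

theorem single_eps_last_mem_Gset :
    MonoidAlgebra.single (eps (Fin.last n)) 1 ∈ Gset n (n + 1) :=
  ⟨eps (Fin.last n), fun i hi => by simpa using eps_last_apply_castSucc ⟨i, hi⟩, rfl⟩

theorem theta_mul_of_commute {a : MonoidAlgebra ℂ (PartialBij (Fin (n + 1)))}
    (ha : Commute (MonoidAlgebra.single (eps (Fin.last n)) 1) a)
    (b : MonoidAlgebra ℂ (PartialBij (Fin (n + 1)))) :
    theta n (a * b) = theta n a * theta n b := by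
  have hε : IsIdempotentElem (MonoidAlgebra.single (eps (Fin.last n)) (1 : ℂ)) :=
    MonoidAlgebra.isIdempotentElem_single_one (isIdempotentElem_eps _)
  apply MonoidAlgebra.mapDomain_injective (R := ℂ) leftInverse_corner_extend0.injective
  rw [mapDomain_extend0_mul, mapDomain_extend0_theta, mapDomain_extend0_theta,
    mapDomain_extend0_theta]
  exact hε.mul_mul_mul_of_commute ha b

end PartialBij

open PartialBij in
/-- The map `θ_{n+1}` restricts to a unital algebra homomorphism from the
centralizer `A_n(n+1)` of `Γ_n(n+1)` in `A(n+1)` to `A(n)`, and on this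
centralizer it is given by `a ↦ ε_{n+1} a ε_{n+1}` (under the `0`-embedding
identification of `A(n)` with a subspace of `A(n+1)`). -/
theorem theta_algebra_hom (n : ℕ) :
    PartialBij.theta n 1 = 1 ∧
    (∀ a b : MonoidAlgebra ℂ (PartialBij (Fin (n + 1))),
      a ∈ Subalgebra.centralizer ℂ (PartialBij.Gset n (n + 1)) →
      b ∈ Subalgebra.centralizer ℂ (PartialBij.Gset n (n + 1)) →
      PartialBij.theta n (a * b) = PartialBij.theta n a * PartialBij.theta n b) ∧
    (∀ a ∈ Subalgebra.centralizer ℂ (PartialBij.Gset n (n + 1)),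
      MonoidAlgebra.mapDomain (PartialBij.extend0 (n := n)) (PartialBij.theta n a) =
        MonoidAlgebra.single (PartialBij.eps (Fin.last n)) 1 * a *
          MonoidAlgebra.single (PartialBij.eps (Fin.last n)) 1) := by
  refine ⟨theta_one, fun a b ha _ => theta_mul_of_commute ?_ b,
    fun a _ => mapDomain_extend0_theta a⟩
  exact (Subalgebra.mem_centralizer_iff ℂ).mp ha _ single_eps_last_mem_Gset
end

section
/- With notation as in the centralizer construction, for 0 ≤ m ≤ n-1 the homomorphism theta_n : A_{n-1}(n) → A(n-1) maps the centralizer A_m(n) of Gamma_m(n) in A(n) into the centralizer A_m(n-1) of Gamma_m(n-1) in A(n-1). -/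
open scoped BigOperators

/-!
If `γ⁺` denotes the extension of a partial bijection `γ` of `{1,…,n}` fixing the point `n+1`,
then striking the last row and column satisfies `corner (δ γ⁺) = corner δ · γ` and
`corner (γ⁺ δ) = γ · corner δ`. Hence `θ (a · γ⁺) = θ a · γ` and `θ (γ⁺ · a) = γ · θ a`, and
as `γ⁺ ∈ Γ_m(n+1)` whenever `γ ∈ Γ_m(n)`, an element commuting with `γ⁺` is sent by `θ` to one
commuting with `γ`.
-/

namespace MonoidAlgebra

variable {R M N : Type*} [Semiring R] [Mul M] [Mul N]

theorem mapDomain_mul_single_of_forall {f : M → N} {g : M} {g' : N}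
    (hf : ∀ x, f (x * g) = f x * g') (a : R[M]) (r : R) :
    mapDomain f (a * single g r) = mapDomain f a * single g' r := by
  induction a using MonoidAlgebra.induction_linear with
  | zero => simp
  | add a b ha hb => rw [add_mul, mapDomain_add, mapDomain_add, ha, hb, add_mul]
  | single x s => simp [single_mul_single, hf]

theorem mapDomain_single_mul_of_forall {f : M → N} {g : M} {g' : N}
    (hf : ∀ x, f (g * x) = g' * f x) (a : R[M]) (r : R) :
    mapDomain f (single g r * a) = single g' r * mapDomain f a := by
  induction a using MonoidAlgebra.induction_linear with
  | zero => simp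
  | add a b ha hb => rw [mul_add, mapDomain_add, mapDomain_add, ha, hb, mul_add]
  | single x s => simp [single_mul_single, hf]

end MonoidAlgebra

namespace PartialBij

variable {n : ℕ}

def extend1 (γ : PartialBij (Fin n)) : PartialBij (Fin (n + 1)) :=
  ⟨Fin.lastCases (some (Fin.last n)) fun i => (γ.1 i).map Fin.castSucc, by
    intro x y z hx hy
    induction x using Fin.lastCases <;> induction y using Fin.lastCases
    case cast.cast i j =>
      simp only [Fin.lastCases_castSucc, Option.map_eq_some_iff] at hx hy
      obtain ⟨a, ha, rfl⟩ := hx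
      obtain ⟨b, hb, hab⟩ := hy
      rw [Fin.castSucc_inj.mp hab] at hb
      exact congrArg _ (γ.2 _ _ _ ha hb)
    all_goals simp_all [Fin.castSucc_ne_last, eq_comm]⟩

@[simp] theorem extend1_apply_last (γ : PartialBij (Fin n)) :
    (extend1 γ).1 (Fin.last n) = some (Fin.last n) := by
  simp [extend1]

@[simp] theorem extend1_apply_castSucc (γ : PartialBij (Fin n)) (i : Fin n) :
    (extend1 γ).1 i.castSucc = (γ.1 i).map Fin.castSucc := by
  simp [extend1]

theorem extend1_apply_of_lt {m : ℕ} {γ : PartialBij (Fin n)}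
    (hγ : ∀ i : Fin n, i.val < m → γ.1 i = some i) :
    ∀ i : Fin (n + 1), i.val < m → (extend1 γ).1 i = some i := by
  intro i
  induction i using Fin.lastCases with
  | last => simp
  | cast i => simp +contextual [hγ]

theorem corner_apply (γ : PartialBij (Fin (n + 1))) (i : Fin n) :
    (corner γ).1 i =
      (γ.1 i.castSucc).bind fun j => if h : j.val < n then some ⟨j.val, h⟩ else none :=
  rfl

theorem corner_mul_extend1 (δ : PartialBij (Fin (n + 1))) (γ : PartialBij (Fin n)) :
    corner (δ * extend1 γ) = corner δ * γ := by
  apply Subtype.ext; funext i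
  simp only [corner_apply, mul_def, extend1_apply_castSucc]
  cases γ.1 i <;> rfl

theorem corner_extend1_mul (γ : PartialBij (Fin n)) (δ : PartialBij (Fin (n + 1))) :
    corner (extend1 γ * δ) = γ * corner δ := by
  apply Subtype.ext; funext i
  simp only [corner_apply, mul_def]
  cases δ.1 i.castSucc with
  | none => rfl
  | some j =>
    induction j using Fin.lastCases with
    | last => simp
    | cast j => cases h : γ.1 j <;> simp [h]

theorem theta_mul_single_extend1 (a : MonoidAlgebra ℂ (PartialBij (Fin (n + 1))))
    (γ : PartialBij (Fin n)) (r : ℂ) :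
    theta n (a * MonoidAlgebra.single (extend1 γ) r) = theta n a * MonoidAlgebra.single γ r :=
  MonoidAlgebra.mapDomain_mul_single_of_forall (fun δ => corner_mul_extend1 δ γ) a r

theorem theta_single_extend1_mul (a : MonoidAlgebra ℂ (PartialBij (Fin (n + 1))))
    (γ : PartialBij (Fin n)) (r : ℂ) :
    theta n (MonoidAlgebra.single (extend1 γ) r * a) = MonoidAlgebra.single γ r * theta n a :=
  MonoidAlgebra.mapDomain_single_mul_of_forall (fun δ => corner_extend1_mul γ δ) a r

theorem single_extend1_mem_Gset {m : ℕ} {γ : PartialBij (Fin n)}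
    (hγ : ∀ i : Fin n, i.val < m → γ.1 i = some i) :
    MonoidAlgebra.single (extend1 γ) 1 ∈ Gset m (n + 1) :=
  ⟨extend1 γ, extend1_apply_of_lt hγ, rfl⟩

end PartialBij

theorem theta_maps_centralizer_general (n m : ℕ) :
    ∀ a ∈ Subalgebra.centralizer ℂ (PartialBij.Gset m (n + 1)),
      PartialBij.theta n a ∈ Subalgebra.centralizer ℂ (PartialBij.Gset m n) := by
  intro a ha
  rw [Subalgebra.mem_centralizer_iff]
  rintro _ ⟨γ, hγ, rfl⟩
  have hcomm := (Subalgebra.mem_centralizer_iff ℂ).mp ha _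
    (PartialBij.single_extend1_mem_Gset hγ)
  rw [← PartialBij.theta_single_extend1_mul, ← PartialBij.theta_mul_single_extend1, hcomm]

/-- For `0 ≤ m ≤ n`, the homomorphism `θ_{n+1}` maps the centralizer
`A_m(n+1)` of `Γ_m(n+1)` into the centralizer `A_m(n)` of `Γ_m(n)`. -/
theorem theta_maps_centralizer (n m : ℕ) (hm : m ≤ n) :
    ∀ a ∈ Subalgebra.centralizer ℂ (PartialBij.Gset m (n + 1)),
      PartialBij.theta n a ∈ Subalgebra.centralizer ℂ (PartialBij.Gset m n) :=
  theta_maps_centralizer_general n m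
end

section
/- In the group algebra C[S(n)], let c_n^{(M)} = sum over all sequences of M pairwise distinct indices i_1,...,i_M in {1,...,n} of the cycle (i_1,...,i_M), for 2 ≤ M ≤ n. Then for partitions M-tuple (M_1,...,M_r) and (L_1,...,L_t) with total size at most n, the product c_n^{M} c_n^{L} equals c_n^{M ∪ L} plus a linear combination of elements c_n^{K} with |K| < |M| + |L|, where c_n^{M} denotes the sum over pairwise distinct index sequences of products of disjoint cycles of lengths M_1,...,M_r. -/
/-!
Expanding the product, `c_n^{M} c_n^{L}` is a sum over pairs of index sequences. The pairs with
disjoint index sets are exactly the index sequences of `M ∪ L` and contribute `c_n^{M ∪ L}`;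
every other pair gives a permutation moving fewer than `|M| + |L|` points. So the difference is
conjugation invariant and supported on permutations of degree `< |M| + |L|`. Such an element is
cleared one conjugacy class at a time: for a class of cycle type `λ`, the element `c_n^{λ}` is
conjugation invariant, supported on that class and nonzero there, and `|λ|` is the degree of
the class.
-/

open scoped BigOperators


open Equiv Finset MonoidAlgebra

namespace List

variable {α β : Type*}

theorem splitWrtCompositionAux_map (f : α → β) :
    ∀ (l : List α) (ns : List ℕ),
      (l.map f).splitWrtCompositionAux ns = (l.splitWrtCompositionAux ns).map (map f)
  | _, [] => rfl
  | l, n :: ns => by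
    simp only [splitWrtCompositionAux_cons, map_cons, map_take, ← map_drop,
      splitWrtCompositionAux_map f _ ns]

theorem splitWrtCompositionAux_append (l₂ : List α) (ns₂ : List ℕ) :
    ∀ (l₁ : List α) (ns₁ : List ℕ), l₁.length = ns₁.sum →
      (l₁ ++ l₂).splitWrtCompositionAux (ns₁ ++ ns₂) =
        l₁.splitWrtCompositionAux ns₁ ++ l₂.splitWrtCompositionAux ns₂
  | l₁, [], h => by
    rw [length_eq_zero_iff.mp h]
    rfl
  | l₁, n :: ns₁, h => by
    have hn : n ≤ l₁.length := by simp [h]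
    rw [cons_append, splitWrtCompositionAux_cons, splitWrtCompositionAux_cons,
      take_append_of_le_length hn, drop_append_of_le_length hn,
      splitWrtCompositionAux_append l₂ ns₂ _ ns₁ (by simp [h]), cons_append]

theorem flatten_splitWrtComposition_ofFn {N : ℕ} (c : Composition N) (w : Fin N → α) :
    ((ofFn w).splitWrtComposition c).flatten = ofFn w :=
  flatten_splitWrtCompositionAux (by rw [c.blocks_sum, length_ofFn])

variable [DecidableEq α]

theorem formPerm_map_perm (g : Equiv.Perm α) :
    ∀ l : List α, (l.map g).formPerm = g * l.formPerm * g⁻¹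
  | [] => by simp
  | [x] => by simp
  | x :: y :: l => by
    rw [map_cons, map_cons, formPerm_cons_cons, ← map_cons, formPerm_map_perm g (y :: l),
      formPerm_cons_cons, swap_apply_apply]
    group

theorem prod_map_formPerm_apply_of_notMem {L : List (List α)} {x : α} (hx : x ∉ L.flatten) :
    (L.map formPerm).prod x = x := by
  induction L with
  | nil => rfl
  | cons l L ih =>
    simp only [flatten_cons, mem_append, not_or] at hx
    rw [map_cons, prod_cons, Equiv.Perm.mul_apply, ih hx.2, formPerm_apply_of_notMem hx.1]

theorem cycleType_prod_map_formPerm [Fintype α] {L : List (List α)} (hL : L.flatten.Nodup)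
    (h2 : ∀ l ∈ L, 2 ≤ l.length) : (L.map formPerm).prod.cycleType = L.map length := by
  obtain ⟨hnodup, hdisj⟩ := nodup_flatten.mp hL
  rw [Equiv.Perm.cycleType_eq _ rfl, map_map]
  · congr 1
    refine map_congr_left fun l hl => ?_
    rw [Function.comp_apply, Function.comp_apply, support_formPerm_of_nodup l (hnodup l hl),
      toFinset_card_of_nodup (hnodup l hl)]
    rintro x rfl
    simpa using h2 _ hl
  · simpa using fun l hl => isCycle_formPerm (hnodup l hl) (h2 l hl)
  · rw [pairwise_map]
    refine hdisj.imp_of_mem fun hl hl' h => ?_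
    exact (formPerm_disjoint_iff (hnodup _ hl) (hnodup _ hl') (h2 _ hl) (h2 _ hl')).2 h

end List

namespace Composition

variable {α : Type*} [DecidableEq α] {N : ℕ}

def cycleProduct (c : Composition N) (w : Fin N ↪ α) : Perm α :=
  (((List.ofFn w).splitWrtComposition c).map List.formPerm).prod

theorem cycleProduct_trans_perm (c : Composition N) (w : Fin N ↪ α) (g : Perm α) :
    c.cycleProduct (w.trans g.toEmbedding) = g * c.cycleProduct w * g⁻¹ := by
  have hofFn : List.ofFn (w.trans g.toEmbedding) = (List.ofFn w).map g := by
    rw [List.map_ofFn]; rfl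
  rw [cycleProduct, cycleProduct, hofFn, List.splitWrtComposition, List.splitWrtCompositionAux_map,
    List.map_map, ← MulAut.conj_apply, map_list_prod, List.map_map]
  congr 2
  funext l
  exact List.formPerm_map_perm g l

theorem support_cycleProduct_subset [Fintype α] (c : Composition N) (w : Fin N ↪ α) :
    (c.cycleProduct w).support ⊆ univ.map w := by
  intro x hx
  by_contra hxw
  refine Perm.mem_support.mp hx (List.prod_map_formPerm_apply_of_notMem ?_)
  rw [List.flatten_splitWrtComposition_ofFn, List.mem_ofFn]
  rintro ⟨i, rfl⟩
  exact hxw (mem_map_of_mem w (mem_univ i))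

theorem cycleType_cycleProduct [Fintype α] (c : Composition N) (hc : ∀ b ∈ c.blocks, 2 ≤ b)
    (w : Fin N ↪ α) : (c.cycleProduct w).cycleType = c.blocks := by
  have hlength : ((List.ofFn w).splitWrtComposition c).map List.length = c.blocks :=
    List.map_length_splitWrtCompositionAux (by rw [c.blocks_sum, List.length_ofFn])
  rw [cycleProduct, List.cycleType_prod_map_formPerm, hlength]
  · rw [List.flatten_splitWrtComposition_ofFn]
    exact List.nodup_ofFn.mpr w.injective
  · exact fun l hl => hc _ (hlength ▸ List.mem_map_of_mem hl)

theorem cycleProduct_app {K : ℕ} (M : Composition N) (L : Composition K)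
    (u : Fin (N + K) ↪ α) :
    (M.app L).cycleProduct u =
      M.cycleProduct ((Fin.castAddEmb K).trans u) * L.cycleProduct ((Fin.natAddEmb N).trans u) := by
  have hofFn : List.ofFn u =
      List.ofFn ((Fin.castAddEmb K).trans u) ++ List.ofFn ((Fin.natAddEmb N).trans u) :=
    List.ofFn_add
  rw [cycleProduct, List.splitWrtComposition, hofFn, app,
    List.splitWrtCompositionAux_append _ _ _ _ (by rw [List.length_ofFn, M.blocks_sum]),
    List.map_append, List.prod_append]
  rfl

end Composition

section ConjInvariant

variable {k G : Type*} [Field k] [Group G]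

def IsConjInvariant (x : k[G]) : Prop :=
  ∀ g : G, domCongr k k (MulAut.conj g) x = x

theorem IsConjInvariant.coeff_eq_of_isConj {x : k[G]} (hx : IsConjInvariant x) {σ τ : G}
    (h : IsConj σ τ) : x.coeff τ = x.coeff σ := by
  obtain ⟨g, rfl⟩ := isConj_iff.mp h
  conv_lhs => rw [← hx g]
  simp [mul_assoc]

theorem mem_span_of_isConjInvariant {S : Set k[G]} {P : Set G}
    (hS : ∀ σ ∈ P, ∃ y ∈ S,
      IsConjInvariant y ∧ y ∈ supported k k {τ | IsConj σ τ} ∧ y.coeff σ ≠ 0)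
    {x : k[G]} (hx : IsConjInvariant x) (hxP : x ∈ supported k k P) :
    x ∈ Submodule.span k S := by
  classical
  induction hs : x.coeff.support using Finset.strongInduction generalizing x with
  | H s ih =>
  subst hs
  obtain hx0 | ⟨σ, hσ⟩ := x.coeff.support.eq_empty_or_nonempty
  · rw [Finsupp.support_eq_empty, coeff_eq_zero] at hx0
    rw [hx0]
    exact zero_mem _
  obtain ⟨y, hyS, hy, hyσ, hyσ0⟩ := hS σ (hxP hσ)
  set a := x.coeff σ / y.coeff σ
  have hinv : IsConjInvariant (x - a • y) := fun g => by rw [map_sub, map_smul, hx g, hy g]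
  -- subtracting `a • y` kills the coefficients on the whole conjugacy class of `σ`
  have hsupp : (x - a • y).coeff.support ⊆ x.coeff.support.erase σ := by
    intro τ hτ
    rw [Finsupp.mem_support_iff, coeff_sub, coeff_smul, Finsupp.sub_apply, Finsupp.smul_apply,
      smul_eq_mul] at hτ
    by_cases hyτ : y.coeff τ = 0
    · rw [hyτ, mul_zero, sub_zero] at hτ
      refine mem_erase.mpr ⟨?_, Finsupp.mem_support_iff.mpr hτ⟩
      rintro rfl
      exact hyσ0 hyτ
    · have hστ : IsConj σ τ := hyσ (Finsupp.mem_support_iff.mpr hyτ)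
      rw [hx.coeff_eq_of_isConj hστ, hy.coeff_eq_of_isConj hστ, div_mul_cancel₀ _ hyσ0,
        sub_self] at hτ
      exact absurd rfl hτ
  have hrest := ih _ (hsupp.trans_ssubset (erase_ssubset hσ)) hinv
    (mem_supported.2 ((coe_subset.2 (hsupp.trans (erase_subset _ _))).trans hxP)) rfl
  rw [← sub_add_cancel x (a • y)]
  exact add_mem hrest (Submodule.smul_mem _ a (Submodule.subset_span hyS))

end ConjInvariant

namespace Equiv.Perm

variable {α : Type*} [Fintype α] [DecidableEq α]

noncomputable def cycleTypeComposition (σ : Perm α) : Composition σ.cycleType.sum where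
  blocks := σ.cycleType.toList
  blocks_pos hi := zero_lt_two.trans_le (two_le_of_mem_cycleType (Multiset.mem_toList.mp hi))
  blocks_sum := Multiset.sum_toList _

theorem isConj_cycleProduct_cycleTypeComposition (σ : Perm α) (w : Fin σ.cycleType.sum ↪ α) :
    IsConj σ (σ.cycleTypeComposition.cycleProduct w) := by
  rw [isConj_iff_cycleType_eq, Composition.cycleType_cycleProduct]
  · exact (Multiset.coe_toList _).symm
  · exact fun b hb => two_le_of_mem_cycleType (Multiset.mem_toList.mp hb)

end Equiv.Perm

section cElt

variable {n N K : ℕ}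

theorem cElt_eq_sum_cycleProduct (c : Composition N) :
    cElt n c = ∑ w : Fin N ↪ Fin n, single (c.cycleProduct w) 1 :=
  rfl

theorem isConjInvariant_cElt (c : Composition N) : IsConjInvariant (cElt n c) := by
  intro g
  rw [cElt_eq_sum_cycleProduct, map_sum]
  refine Fintype.sum_equiv (embeddingCongr (Equiv.refl _) g) _ _ fun w => ?_
  rw [domCongr_single, MulAut.conj_apply, ← Composition.cycleProduct_trans_perm]
  rfl

theorem cElt_cycleTypeComposition_mem_supported (σ : Perm (Fin n)) :
    cElt n σ.cycleTypeComposition ∈ supported ℂ ℂ {τ | IsConj σ τ} := by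
  rw [cElt_eq_sum_cycleProduct, supported_eq_span_single]
  exact sum_mem fun w _ =>
    Submodule.subset_span ⟨_, σ.isConj_cycleProduct_cycleTypeComposition w, rfl⟩

theorem coeff_cElt_cycleTypeComposition_self_ne_zero (σ : Perm (Fin n)) :
    (cElt n σ.cycleTypeComposition).coeff σ ≠ 0 := by
  let w : Fin σ.cycleType.sum ↪ Fin n := Fin.castLEEmb (by simpa using σ.sum_cycleType_le)
  obtain ⟨g, hg⟩ := isConj_iff.mp (σ.isConj_cycleProduct_cycleTypeComposition w).symm
  rw [cElt_eq_sum_cycleProduct, coeff_sum, Finsupp.finsetSum_apply]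
  simp only [coeff_single, Finsupp.single_apply, sum_boole]
  exact Nat.cast_ne_zero.mpr (card_ne_zero.mpr
    ⟨w.trans g.toEmbedding, by simp [Composition.cycleProduct_trans_perm, hg]⟩)

theorem mem_span_cElt_of_isConjInvariant {m : ℕ} {x : MonoidAlgebra ℂ (Perm (Fin n))}
    (hx : IsConjInvariant x) (hxm : x ∈ supported ℂ ℂ {σ | #σ.support < m}) :
    x ∈ Submodule.span ℂ
      {a | ∃ N' : ℕ, N' < m ∧ ∃ c : Composition N', a = cElt n c} := by
  refine mem_span_of_isConjInvariant (fun σ hσ => ?_) hx hxm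
  exact ⟨cElt n σ.cycleTypeComposition, ⟨_, σ.sum_cycleType ▸ hσ, _, rfl⟩,
    isConjInvariant_cElt _, cElt_cycleTypeComposition_mem_supported σ,
    coeff_cElt_cycleTypeComposition_self_ne_zero σ⟩

theorem cElt_mul_cElt (M : Composition N) (L : Composition K) :
    cElt n M * cElt n L = ∑ p : (Fin N ↪ Fin n) × (Fin K ↪ Fin n),
      single (M.cycleProduct p.1 * L.cycleProduct p.2) 1 := by
  simp only [cElt_eq_sum_cycleProduct, sum_mul_sum, single_mul_single, one_mul,
    Fintype.sum_prod_type]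

open Classical in
theorem cElt_app_eq_sum_disjoint (M : Composition N) (L : Composition K) :
    cElt n (M.app L) =
      ∑ p ∈ univ.filter fun p : (Fin N ↪ Fin n) × (Fin K ↪ Fin n) =>
          Disjoint (Set.range p.1) (Set.range p.2),
        single (M.cycleProduct p.1 * L.cycleProduct p.2) 1 := by
  rw [cElt_eq_sum_cycleProduct]
  refine (Fintype.sum_equiv ((embeddingCongr finSumFinEquiv.symm (Equiv.refl _)).trans
    sumEmbeddingEquivProdEmbeddingDisjoint) _ _ fun u => ?_).trans
    (sum_subtype _ (fun p => by simp) _).symm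
  rw [Composition.cycleProduct_app]
  rfl

theorem card_support_cycleProduct_mul_lt {α : Type*} [Fintype α] [DecidableEq α]
    (M : Composition N) (L : Composition K) {w : Fin N ↪ α} {v : Fin K ↪ α}
    (h : ¬Disjoint (Set.range w) (Set.range v)) :
    #(M.cycleProduct w * L.cycleProduct v).support < N + K := by
  obtain ⟨_, ⟨i, rfl⟩, ⟨j, hj⟩⟩ := Set.not_disjoint_iff.mp h
  have hinter : (univ.map w ∩ univ.map v).Nonempty :=
    ⟨w i, mem_inter.mpr
      ⟨mem_map_of_mem _ (mem_univ i), hj ▸ mem_map_of_mem _ (mem_univ j)⟩⟩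
  have hunion := card_union_add_card_inter (univ.map w) (univ.map v)
  have hsub := (Perm.support_mul_le _ _).trans
    (union_subset_union (M.support_cycleProduct_subset w) (L.support_cycleProduct_subset v))
  simp only [card_map, card_univ, Fintype.card_fin] at hunion
  have hle := card_le_card hsub
  have hpos := hinter.card_pos
  omega

theorem cElt_mul_sub_cElt_app_mem_supported (M : Composition N) (L : Composition K) :
    cElt n M * cElt n L - cElt n (M.app L) ∈ supported ℂ ℂ {σ | #σ.support < N + K} := by
  classical
  rw [cElt_mul_cElt, cElt_app_eq_sum_disjoint,
    ← sum_filter_add_sum_filter_not univ fun p => Disjoint (Set.range p.1) (Set.range p.2),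
    add_sub_cancel_left, supported_eq_span_single]
  exact sum_mem fun p hp =>
    Submodule.subset_span ⟨_, card_support_cycleProduct_mul_lt M L (mem_filter.mp hp).2, rfl⟩

end cElt

theorem cElt_mul_general (n : ℕ) {N K : ℕ} (M : Composition N) (L : Composition K) :
    cElt n M * cElt n L - cElt n (M.app L) ∈
      Submodule.span ℂ
        {a : MonoidAlgebra ℂ (Equiv.Perm (Fin n)) |
          ∃ N' : ℕ, N' < N + K ∧ ∃ c : Composition N', a = cElt n c} :=
  mem_span_cElt_of_isConjInvariant
    (fun g => by
      rw [map_sub, map_mul, isConjInvariant_cElt M g, isConjInvariant_cElt L g,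
        isConjInvariant_cElt (M.app L) g])
    (cElt_mul_sub_cElt_app_mem_supported M L)

/-- `c_n^{M} · c_n^{L} = c_n^{M ∪ L} +` a linear combination of elements
`c_n^{K}` with `|K| < |M| + |L|`. -/
theorem cElt_mul (n : ℕ) {N K : ℕ} (M : Composition N) (L : Composition K)
    (h : N + K ≤ n) :
    cElt n M * cElt n L - cElt n (M.app L) ∈
      Submodule.span ℂ
        {a : MonoidAlgebra ℂ (Equiv.Perm (Fin n)) |
          ∃ N' : ℕ, N' < N + K ∧ ∃ c : Composition N', a = cElt n c} :=
  cElt_mul_general n M L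
end
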